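/- Any welfare maximizer is a Nash equilibrium of the experiment-choice game under the VCG stage-2 rule: if μ* ∈ D_1 × ⋯ × D_n maximizes W over D_1 × ⋯ × D_n, then for every bidder i and every ν ∈ D_i, Π_i(μ*) ≥ Π_i(ν, μ*_{−i}). -/

import Mathlib

/-! Bidder `i`'s VCG payoff is `Π_i(μ) = W(μ) + ∑_{j ≠ i} c_j(μ_j) - E[max_{j ≠ i} t_j]`, and the
last two terms do not depend on `μ_i`: the opponents' maximum only reads the coordinates `j ≠ i`,
whose joint law under the product measure is the product of the `μ_j`, `j ≠ i`. So a unilateral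
deviation of bidder `i` changes her payoff by exactly the change in welfare, which is `≤ 0` at a
welfare maximizer. -/

open MeasureTheory Finset

noncomputable section

/-- The highest opposing bid `max_{j ≠ i} t j`. -/
def maxOpp {n : ℕ} (t : Fin n → ℝ) (i : Fin n) : ℝ :=
  ⨆ j : {j : Fin n // j ≠ i}, t j

/-- Expected welfare of an experiment profile under the VCG stage-2 rule:
expected maximum bid minus total information costs. -/
def Wel {n : ℕ} (c : Fin n → Measure ℝ → ℝ) (μ : Fin n → Measure ℝ) : ℝ :=
  (∫ t, (⨆ k, t k) ∂ Measure.pi μ) - ∑ j, c j (μ j)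

/-- Bidder `i`'s expected net payoff under the VCG stage-2 rule: her expected
VCG payoff minus her information cost. -/
def Pnet {n : ℕ} (c : Fin n → Measure ℝ → ℝ) (μ : Fin n → Measure ℝ)
    (i : Fin n) : ℝ :=
  (∫ t, ((⨆ k, t k) - maxOpp t i) ∂ Measure.pi μ) - c i (μ i)

lemma abs_ciSup_le_max_abs {ι : Type*} [Finite ι] {a b : ℝ} {t : ι → ℝ}
    (ht : ∀ j, t j ∈ Set.Icc a b) : |⨆ j, t j| ≤ max |a| |b| := by
  rcases isEmpty_or_nonempty ι with hι | hι
  · simp [Real.iSup_of_isEmpty]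
  · exact abs_le_max_abs_abs
      ((ht (Classical.arbitrary ι)).1.trans (le_ciSup (Finite.bddAbove_range t) _))
      (ciSup_le fun j => (ht j).2)

section Pi

variable {ι : Type*} [Fintype ι]

lemma ae_pi_forall_mem_Icc {μ : ι → Measure ℝ} [∀ j, IsProbabilityMeasure (μ j)] {a b : ℝ}
    (hsupp : ∀ j, μ j (Set.Icc a b) = 1) :
    ∀ᵐ t ∂Measure.pi μ, ∀ j, t j ∈ Set.Icc a b :=
  Filter.eventually_all.2 fun j => Measure.tendsto_eval_ae_ae.eventually <|
    (mem_ae_iff_prob_eq_one measurableSet_Icc).2 (hsupp j)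

lemma integrable_pi_iSup_comp {κ : Type*} [Finite κ] {μ : ι → Measure ℝ}
    [∀ j, IsProbabilityMeasure (μ j)] {a b : ℝ} (hsupp : ∀ j, μ j (Set.Icc a b) = 1)
    (g : κ → ι) :
    Integrable (fun t => ⨆ k, t (g k)) (Measure.pi μ) :=
  Integrable.of_bound (Measurable.iSup fun k => measurable_pi_apply (g k)).aestronglyMeasurable
    (max |a| |b|) <| (ae_pi_forall_mem_Icc hsupp).mono fun _ ht =>
      abs_ciSup_le_max_abs fun k => ht (g k)

variable {X : ι → Type*} [∀ j, MeasurableSpace (X j)]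

lemma measurePreserving_subtype_restrict (μ : ∀ j, Measure (X j))
    [∀ j, IsProbabilityMeasure (μ j)] (p : ι → Prop) [DecidablePred p] :
    MeasurePreserving (fun x (j : Subtype p) => x j) (Measure.pi μ)
      (Measure.pi fun j : Subtype p => μ j) :=
  (measurePreserving_fst (μ := Measure.pi fun j : Subtype p => μ j)
    (ν := Measure.pi fun j : {j // ¬ p j} => μ j)).comp
    (measurePreserving_piEquivPiSubtypeProd μ p)

lemma integral_pi_comp_restrict_congr [DecidableEq ι] {E : Type*} [NormedAddCommGroup E]
    [NormedSpace ℝ E]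
    {μ μ' : ∀ j, Measure (X j)} [∀ j, IsProbabilityMeasure (μ j)]
    [∀ j, IsProbabilityMeasure (μ' j)] (i : ι) (h : ∀ j ≠ i, μ j = μ' j)
    {f : (∀ j : {j // j ≠ i}, X j) → E} (hf : StronglyMeasurable f) :
    ∫ x, f (fun j => x j) ∂Measure.pi μ = ∫ x, f (fun j => x j) ∂Measure.pi μ' := by
  have hμ : (Measure.pi fun j : {j // j ≠ i} => μ j) = Measure.pi fun j : {j // j ≠ i} => μ' j :=
    congrArg Measure.pi (funext fun j => h j j.2)
  rw [← integral_map (measurePreserving_subtype_restrict μ _).measurable.aemeasurable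
      hf.aestronglyMeasurable, ← integral_map
      (measurePreserving_subtype_restrict μ' _).measurable.aemeasurable hf.aestronglyMeasurable,
    (measurePreserving_subtype_restrict μ _).map_eq,
    (measurePreserving_subtype_restrict μ' _).map_eq, hμ]

end Pi

lemma Pnet_eq_Wel_add {n : ℕ} (c : Fin n → Measure ℝ → ℝ) {μ : Fin n → Measure ℝ}
    [∀ j, IsProbabilityMeasure (μ j)] {a b : ℝ} (hsupp : ∀ j, μ j (Set.Icc a b) = 1)
    (i : Fin n) :
    Pnet c μ i = Wel c μ + ∑ j ∈ univ.erase i, c j (μ j) - ∫ t, maxOpp t i ∂Measure.pi μ := by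
  rw [Pnet, Wel, integral_sub (f := fun t => ⨆ k, t k) (g := fun t => maxOpp t i)
    (integrable_pi_iSup_comp hsupp fun k => k) (integrable_pi_iSup_comp hsupp Subtype.val),
    ← add_sum_erase _ _ (mem_univ i)]
  ring

theorem welfare_maximizer_is_nash_general (n : ℕ) (a b : ℝ)
    (Dset : Fin n → Set (Measure ℝ))
    (hDprob : ∀ j, ∀ μ ∈ Dset j, IsProbabilityMeasure μ ∧ μ (Set.Icc a b) = 1)
    (c : Fin n → Measure ℝ → ℝ)
    (μstar : Fin n → Measure ℝ) (hμstar : ∀ j, μstar j ∈ Dset j)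
    (hmax : ∀ μ : Fin n → Measure ℝ, (∀ j, μ j ∈ Dset j) → Wel c μ ≤ Wel c μstar) :
    ∀ i : Fin n, ∀ ν ∈ Dset i,
      Pnet c (Function.update μstar i ν) i ≤ Pnet c μstar i := by
  intro i ν hν
  set μ := Function.update μstar i ν
  have hoff : ∀ j ≠ i, μ j = μstar j := fun j hj => Function.update_of_ne hj _ _
  have hμ : ∀ j, μ j ∈ Dset j := fun j => by
    rcases eq_or_ne j i with rfl | hj
    · simpa [μ] using hν
    · exact hoff j hj ▸ hμstar j
  have hprob : ∀ j, IsProbabilityMeasure (μ j) := fun j => (hDprob j _ (hμ j)).1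
  have hprobstar : ∀ j, IsProbabilityMeasure (μstar j) := fun j => (hDprob j _ (hμstar j)).1
  have hcost : ∑ j ∈ univ.erase i, c j (μ j) = ∑ j ∈ univ.erase i, c j (μstar j) :=
    sum_congr rfl fun j hj => by rw [hoff j (ne_of_mem_erase hj)]
  have hopp : ∫ t, maxOpp t i ∂Measure.pi μ = ∫ t, maxOpp t i ∂Measure.pi μstar :=
    integral_pi_comp_restrict_congr i hoff
      (Measurable.iSup fun j => measurable_pi_apply j).stronglyMeasurable
  rw [Pnet_eq_Wel_add c (fun j => (hDprob j _ (hμ j)).2),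
    Pnet_eq_Wel_add c (fun j => (hDprob j _ (hμstar j)).2), hcost, hopp]
  linarith [hmax μ hμ]

/-- Any welfare maximizer is a Nash equilibrium of the experiment-choice game
under the VCG stage-2 rule: if `μ*` maximizes `W` over `D_1 × ⋯ × D_n`, then no
bidder can gain by unilaterally deviating to another experiment in her set. -/
theorem welfare_maximizer_is_nash (n : ℕ) (hn : 2 ≤ n) (a b : ℝ) (hab : a < b)
    (Dset : Fin n → Set (Measure ℝ)) (hDne : ∀ j, (Dset j).Nonempty)
    (hDprob : ∀ j, ∀ μ ∈ Dset j, IsProbabilityMeasure μ ∧ μ (Set.Icc a b) = 1)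
    (c : Fin n → Measure ℝ → ℝ)
    (μstar : Fin n → Measure ℝ) (hμstar : ∀ j, μstar j ∈ Dset j)
    (hmax : ∀ μ : Fin n → Measure ℝ, (∀ j, μ j ∈ Dset j) → Wel c μ ≤ Wel c μstar) :
    ∀ i : Fin n, ∀ ν ∈ Dset i,
      Pnet c (Function.update μstar i ν) i ≤ Pnet c μstar i :=
  welfare_maximizer_is_nash_general n a b Dset hDprob c μstar hμstar hmax
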